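/- In the MedBoost algorithm run for T = Θ(ln(m)/γ²) rounds on a sample {(x_i, y_i)}_{i=1}^m, if each weak hypothesis h_t satisfies the (η/2, γ)-weak learning condition Σ_i P_t(i)·𝟙[|h_t(x_i) − y_i| ≤ η/2] ≥ 1/2 + γ, then for every i ∈ [m], both weighted γ/2-quantiles of the ensemble predictions at x_i are within η/2 of y_i: max{|Q⁺_{γ/2}(x_i) − y_i|, |Q⁻_{γ/2}(x_i) − y_i|} ≤ η/2. -/

import Mathlib

/-- Weighted upper γ-quantile of the values `v` with weights `a`. -/
noncomputable def wQp {T : ℕ} (γ : ℝ) (v a : Fin T → ℝ) : ℝ :=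
  sInf {z : ℝ | ∃ j : Fin T, v j = z ∧
    (∑ t, if z < v t then a t else 0) / (∑ t, a t) < 1 / 2 - γ}

/-- Weighted lower γ-quantile of the values `v` with weights `a`. -/
noncomputable def wQm {T : ℕ} (γ : ℝ) (v a : Fin T → ℝ) : ℝ :=
  sSup {z : ℝ | ∃ j : Fin T, v j = z ∧
    (∑ t, if v t < z then a t else 0) / (∑ t, a t) < 1 / 2 - γ}

/-!
Each MedBoost round is a multiplicative-weights step on the margins
`θᵢ = ±1` (correct up to `η/2` or not), and `α_t` minimises `e^{γα} Z_t(α)`, where `Z_t` is the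
normaliser. The minimum equals `exp (-KL((1+γ)/2 ‖ g_t))` with `g_t ≥ 1/2 + γ` the weighted
accuracy, so by Pinsker it is at most `e^{-γ²/2}`. Unrolling the weights gives
`P₀(i) e^{∑ α_t (γ - θᵢ⁽ᵗ⁾)} ≤ ∏ e^{γ α_t} Z_t ≤ e^{-γ² T / 2} < 1 / m`, so every sample point has
margin `∑ α_t θᵢ⁽ᵗ⁾ > γ ∑ α_t`: more than a `1/2 + γ/2` fraction of the `α`-weight lies on
predictions within `η/2` of `yᵢ`. Then the upper `γ/2`-quantile is at most the largest such
prediction (everything above it is wrong) and at least `yᵢ - η/2` (below that, all correct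
predictions are above it); the lower quantile is symmetric.
-/

open Real Finset

theorem sum_ite_le_sum_ite_of_imp {ι : Type*} [Fintype ι] {p q : ι → Prop} [DecidablePred p]
    [DecidablePred q] {w : ι → ℝ} (hw : ∀ t, 0 ≤ w t) (hpq : ∀ t, p t → q t) :
    (∑ t, if p t then w t else 0) ≤ ∑ t, if q t then w t else 0 :=
  sum_le_sum fun t _ => by
    by_cases hp : p t
    · simp [hp, hpq t hp]
    · simp only [hp, if_false]; split_ifs <;> simp [hw t]

section Quantile

variable {T : ℕ} {γ r y : ℝ} {v w : Fin T → ℝ}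

theorem abs_wQp_sub_le (hw : ∀ t, 0 ≤ w t) (hγ : 0 ≤ γ)
    (hgood : (1 / 2 + γ) * ∑ t, w t < ∑ t, if |v t - y| ≤ r then w t else 0) :
    |wQp γ v w - y| ≤ r := by
  set A := ∑ t, w t
  set G := ∑ t, if |v t - y| ≤ r then w t else 0
  set B := ∑ t, if ¬|v t - y| ≤ r then w t else 0
  have hGB : G + B = A := by
    rw [← sum_add_distrib]; exact sum_congr rfl fun t _ => by split_ifs <;> simp
  have hB : 0 ≤ B := sum_nonneg fun t _ => by split_ifs <;> simp [hw t]
  have hA : 0 < A := by nlinarith [sum_nonneg fun t (_ : t ∈ univ) => hw t]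
  obtain ⟨j, hj, hjmax⟩ := (univ.filter fun t => |v t - y| ≤ r).exists_max_image v <| by
    by_contra hempty
    have : G = 0 :=
      sum_eq_zero fun t _ => if_neg fun h => hempty ⟨t, mem_filter.mpr ⟨mem_univ t, h⟩⟩
    nlinarith
  have hjy := abs_le.mp (mem_filter.mp hj).2
  have hmem : ∃ k, v k = v j ∧
      (∑ t, if v j < v t then w t else 0) / A < 1 / 2 - γ := by
    refine ⟨j, rfl, (div_lt_iff₀ hA).mpr ?_⟩
    have : (∑ t, if v j < v t then w t else 0) ≤ B :=
      sum_ite_le_sum_ite_of_imp hw fun t hlt hgood =>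
        (hjmax t (mem_filter.mpr ⟨mem_univ t, hgood⟩)).not_gt hlt
    linarith
  have hlower : ∀ z ∈ {z : ℝ | ∃ k, v k = z ∧
      (∑ t, if z < v t then w t else 0) / A < 1 / 2 - γ}, y - r ≤ z := by
    rintro z ⟨k, -, hz⟩
    by_contra! hzy
    have : G ≤ ∑ t, if z < v t then w t else 0 :=
      sum_ite_le_sum_ite_of_imp hw fun t hgood => by linarith [(abs_le.mp hgood).1]
    rw [div_lt_iff₀ hA] at hz
    nlinarith
  have hle : wQp γ v w ≤ v j := csInf_le ⟨y - r, hlower⟩ hmem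
  have hge : y - r ≤ wQp γ v w := le_csInf ⟨v j, hmem⟩ hlower
  exact abs_le.mpr ⟨by linarith, by linarith⟩

theorem wQm_eq_neg_wQp_neg : wQm γ v w = -wQp γ (-v) w := by
  rw [wQm, wQp, Real.sInf_def, neg_neg]
  congr 1
  ext z
  simp only [Set.mem_neg, Set.mem_ofPred_eq, Pi.neg_apply, neg_lt_neg_iff, neg_eq_iff_eq_neg,
    neg_neg]

theorem abs_wQm_sub_le (hw : ∀ t, 0 ≤ w t) (hγ : 0 ≤ γ)
    (hgood : (1 / 2 + γ) * ∑ t, w t < ∑ t, if |v t - y| ≤ r then w t else 0) :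
    |wQm γ v w - y| ≤ r := by
  have hsymm : ∀ t, |(-v) t - -y| = |v t - y| := fun t => by
    rw [Pi.neg_apply, neg_sub_neg, abs_sub_comm]
  have := abs_wQp_sub_le (v := -v) (y := -y) (r := r) hw hγ (by simpa only [hsymm] using hgood)
  rwa [wQm_eq_neg_wQp_neg, show -wQp γ (-v) w - y = -(wQp γ (-v) w - -y) by ring, abs_neg]

end Quantile

theorem two_mul_sq_sub_le_binary_kl {p q : ℝ} (hp : 0 < p) (hpq : p ≤ q) (hq : q < 1) :
    2 * (q - p) ^ 2 ≤ p * log (p / q) + (1 - p) * log ((1 - p) / (1 - q)) := by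
  let f : ℝ → ℝ := fun x =>
    p * (log p - log x) + (1 - p) * (log (1 - p) - log (1 - x)) - 2 * (x - p) ^ 2
  have hderiv : ∀ x ∈ Set.Icc p q,
      HasDerivAt f ((x - p) * (1 - 2 * x) ^ 2 / (x * (1 - x))) x := by
    rintro x ⟨hpx, hxq⟩
    have hx0 : x ≠ 0 := by linarith
    have hx1 : 1 - x ≠ 0 := by linarith
    exact ((((hasDerivAt_log hx0).const_sub (log p)).const_mul p).add
      ((((hasDerivAt_id' x).const_sub 1).log hx1).const_sub (log (1 - p)) |>.const_mul (1 - p))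
      |>.sub (((hasDerivAt_id' x).sub_const p).pow 2 |>.const_mul 2)).congr_deriv
      (by field_simp; ring)
  have hmono : MonotoneOn f (Set.Icc p q) :=
    monotoneOn_of_hasDerivWithinAt_nonneg (convex_Icc p q)
      (fun x hx => (hderiv x hx).continuousAt.continuousWithinAt)
      (fun x hx => (hderiv x (interior_subset hx)).hasDerivWithinAt)
      (fun x hx => by
        rw [interior_Icc] at hx
        have : 0 < 1 - x := by linarith [hx.2]
        have : 0 ≤ x - p := by linarith [hx.1]
        have : 0 < x := by linarith [hx.1]
        positivity)
  have := hmono (Set.left_mem_Icc.mpr hpq) (Set.right_mem_Icc.mpr hpq) hpq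
  rw [log_div hp.ne' (by linarith), log_div (by linarith) (by linarith)]
  simp only [f, sub_self] at this
  linarith

section Round

variable {γ g b α : ℝ}

theorem exp_mul_mul_add_eq_exp_neg_binary_kl (hγ₀ : -1 < γ) (hγ₁ : γ < 1) (hg : 0 < g)
    (hb : 0 < b) (hα : α = 1 / 2 * log ((1 - γ) * g / ((1 + γ) * b))) :
    exp (γ * α) * (exp (-α) * g + exp α * b) =
      exp (-((1 + γ) / 2 * log ((1 + γ) / 2 / g) + (1 - γ) / 2 * log ((1 - γ) / 2 / b))) := by
  have h1 : 0 < 1 + γ := by linarith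
  have h2 : 0 < 1 - γ := by linarith
  have hexp2α : exp (2 * α) = (1 - γ) * g / ((1 + γ) * b) := by
    rw [hα, show 2 * (1 / 2 * log ((1 - γ) * g / ((1 + γ) * b))) =
      log ((1 - γ) * g / ((1 + γ) * b)) by ring, exp_log (by positivity)]
  have hsum : exp (-α) * g + exp α * b = exp (-α) * (2 * g / (1 + γ)) := by
    rw [show exp α = exp (-α) * exp (2 * α) by rw [← exp_add]; ring_nf, hexp2α]
    field_simp
    ring
  rw [hsum, ← mul_assoc, ← exp_add, ← exp_log (by positivity : 0 < 2 * g / (1 + γ)),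
    ← exp_add, hα]
  congr 1
  rw [log_div (by positivity) (by positivity), log_div (by positivity) (by positivity),
    log_div (by positivity) (by positivity), log_div (by positivity) (by positivity),
    log_div (by positivity) (by positivity), log_div (by positivity) (by positivity),
    log_mul (by positivity) (by positivity),
    log_mul (by positivity) (by positivity), log_mul (by positivity) (by positivity)]
  ring

theorem exp_mul_mul_add_le_exp_neg_sq (hγ : 0 ≤ γ) (hgb : g + b = 1) (hb : 0 < b)
    (hg : 1 / 2 + γ ≤ g) (hα : α = 1 / 2 * log ((1 - γ) * g / ((1 + γ) * b))) :
    exp (γ * α) * (exp (-α) * g + exp α * b) ≤ exp (-(γ ^ 2 / 2)) := by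
  rw [exp_mul_mul_add_eq_exp_neg_binary_kl (by linarith) (by linarith) (by linarith) hb hα,
    exp_le_exp, neg_le_neg_iff]
  have hkl := two_mul_sq_sub_le_binary_kl (p := (1 + γ) / 2) (q := g)
    (by linarith) (by linarith) (by linarith)
  rw [show 1 - (1 + γ) / 2 = (1 - γ) / 2 by ring, show 1 - g = b by linarith] at hkl
  nlinarith

theorem half_log_ratio_nonneg (hγ : 0 ≤ γ) (hgb : g + b = 1) (hb : 0 < b) (hg : 1 / 2 + γ ≤ g)
    (hα : α = 1 / 2 * log ((1 - γ) * g / ((1 + γ) * b))) : 0 ≤ α := by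
  rw [hα]
  refine mul_nonneg (by norm_num) (log_nonneg ((one_le_div (by positivity)).mpr ?_))
  nlinarith

end Round

namespace MultWeights

variable {ι : Type*} [Fintype ι] (P : ℕ → ι → ℝ) (a : ℕ → ℝ) (θ : ℕ → ι → ℝ)

noncomputable def normalizer (t : ℕ) : ℝ := ∑ j, P t j * exp (-a t * θ t j)

variable {P a θ} {T : ℕ}

theorem normalizer_pos {t : ℕ} (hpos : ∀ i, 0 < P t i) (hsum : ∑ i, P t i = 1) :
    0 < normalizer P a θ t :=
  sum_pos (fun j _ => mul_pos (hpos j) (exp_pos _))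
    (nonempty_of_sum_ne_zero (hsum ▸ one_ne_zero))

theorem pos_and_sum_eq_one (hpos : ∀ i, 0 < P 0 i) (hsum : ∑ i, P 0 i = 1)
    (hupd : ∀ t < T, ∀ i, P (t + 1) i = P t i * exp (-a t * θ t i) / normalizer P a θ t) :
    ∀ t ≤ T, (∀ i, 0 < P t i) ∧ ∑ i, P t i = 1
  | 0, _ => ⟨hpos, hsum⟩
  | t + 1, ht => by
    obtain ⟨hpos, hsum⟩ := pos_and_sum_eq_one hpos hsum hupd t (by omega)
    have hZ := normalizer_pos (a := a) (θ := θ) hpos hsum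
    refine ⟨fun i => ?_, ?_⟩
    · rw [hupd t (by omega)]
      exact div_pos (mul_pos (hpos i) (exp_pos _)) hZ
    · simp only [hupd t (by omega), ← sum_div]
      exact div_self hZ.ne'

theorem normalizer_pos_of_lt (hpos : ∀ i, 0 < P 0 i) (hsum : ∑ i, P 0 i = 1)
    (hupd : ∀ t < T, ∀ i, P (t + 1) i = P t i * exp (-a t * θ t i) / normalizer P a θ t)
    {t : ℕ} (ht : t < T) : 0 < normalizer P a θ t :=
  normalizer_pos (pos_and_sum_eq_one hpos hsum hupd t ht.le).1
    (pos_and_sum_eq_one hpos hsum hupd t ht.le).2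

theorem mul_prod_normalizer (hpos : ∀ i, 0 < P 0 i) (hsum : ∑ i, P 0 i = 1)
    (hupd : ∀ t < T, ∀ i, P (t + 1) i = P t i * exp (-a t * θ t i) / normalizer P a θ t)
    (i : ι) : ∀ t ≤ T, P t i * ∏ s ∈ range t, normalizer P a θ s =
      P 0 i * exp (-∑ s ∈ range t, a s * θ s i)
  | 0, _ => by simp
  | t + 1, ht => by
    have hZ := (normalizer_pos_of_lt hpos hsum hupd ht).ne'
    rw [prod_range_succ, sum_range_succ, neg_add, exp_add, hupd t (by omega),
      ← mul_assoc (P 0 i), ← mul_prod_normalizer hpos hsum hupd i t (by omega), neg_mul]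
    field_simp

/-- Kégl's lemma, for a single sample point. -/
theorem mul_exp_le_prod (hpos : ∀ i, 0 < P 0 i) (hsum : ∑ i, P 0 i = 1)
    (hupd : ∀ t < T, ∀ i, P (t + 1) i = P t i * exp (-a t * θ t i) / normalizer P a θ t)
    (γ : ℝ) (i : ι) :
    P 0 i * exp (∑ s ∈ range T, a s * (γ - θ s i)) ≤
      ∏ s ∈ range T, exp (γ * a s) * normalizer P a θ s := by
  obtain ⟨hposT, hsumT⟩ := pos_and_sum_eq_one hpos hsum hupd T le_rfl
  have hPT : P T i ≤ 1 := hsumT ▸ single_le_sum (fun j _ => (hposT j).le) (mem_univ i)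
  have hprod : 0 ≤ ∏ s ∈ range T, normalizer P a θ s :=
    prod_nonneg fun s hs => (normalizer_pos_of_lt hpos hsum hupd (mem_range.mp hs)).le
  calc P 0 i * exp (∑ s ∈ range T, a s * (γ - θ s i))
      = exp (γ * ∑ s ∈ range T, a s) * (P T i * ∏ s ∈ range T, normalizer P a θ s) := by
        rw [mul_prod_normalizer hpos hsum hupd i T le_rfl, mul_left_comm, ← exp_add]
        congr 2
        simp only [mul_sum, ← sum_neg_distrib, ← sum_add_distrib]
        exact sum_congr rfl fun s _ => by ring
    _ ≤ exp (γ * ∑ s ∈ range T, a s) * ∏ s ∈ range T, normalizer P a θ s := by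
        gcongr
        exact mul_le_of_le_one_left hprod hPT
    _ = ∏ s ∈ range T, exp (γ * a s) * normalizer P a θ s := by
        rw [prod_mul_distrib, mul_sum, exp_sum]

end MultWeights

theorem natCast_mul_exp_neg_half_lt_one {m : ℕ} {x : ℝ} (hm : 0 < m) (hx : 0 < x)
    (hmx : 4 * log m ≤ x) : m * exp (-(x / 2)) < 1 := by
  rw [← exp_log (Nat.cast_pos.mpr hm : (0 : ℝ) < m), ← exp_add, exp_lt_one_iff]
  linarith

namespace MedBoost

open MultWeights

theorem sum_mul_sign_eq {ι : Type*} (a : ℕ → ℝ) (e : ℕ → ι → ℝ) (r : ℝ) (s : Finset ℕ) (i : ι) :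
    ∑ t ∈ s, a t * (if e t i ≤ r then 1 else -1) =
      2 * ∑ t ∈ s, (if e t i ≤ r then a t else 0) - ∑ t ∈ s, a t := by
  rw [mul_sum, ← sum_sub_distrib]
  exact sum_congr rfl fun t _ => by split_ifs <;> ring

theorem sum_mul_ite_le_add_sum_mul_ite_lt {ι : Type*} [Fintype ι] (r : ℝ) (p f : ι → ℝ) :
    ∑ i, p i * (if f i ≤ r then 1 else 0) + ∑ i, p i * (if r < f i then 1 else 0) =
      ∑ i, p i := by
  rw [← sum_add_distrib]
  exact sum_congr rfl fun i _ => by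
    rcases le_or_gt (f i) r with h | h <;> simp [h, not_lt.mpr, not_le.mpr]

section

variable {ι : Type*} [Fintype ι] {P : ℕ → ι → ℝ} {a : ℕ → ℝ} {e : ℕ → ι → ℝ} {r : ℝ}

theorem normalizer_sign_eq (t : ℕ) :
    normalizer P a (fun t i => if e t i ≤ r then 1 else -1) t =
      exp (-a t) * ∑ i, P t i * (if e t i ≤ r then 1 else 0) +
        exp (a t) * ∑ i, P t i * (if r < e t i then 1 else 0) := by
  rw [normalizer, mul_sum, mul_sum, ← sum_add_distrib]
  exact sum_congr rfl fun i _ => by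
    rcases le_or_gt (e t i) r with h | h <;> simp [h, not_lt.mpr, not_le.mpr] <;> ring

theorem coeff_nonneg_and_exp_mul_normalizer_le {γ : ℝ} {t : ℕ} (hγ : 0 ≤ γ)
    (hsum : ∑ i, P t i = 1)
    (hweak : 1 / 2 + γ ≤ ∑ i, P t i * (if e t i ≤ r then 1 else 0))
    (hbad : 0 < ∑ i, P t i * (if r < e t i then 1 else 0))
    (ha : a t = 1 / 2 * log (((1 - γ) * ∑ i, P t i * (if e t i ≤ r then 1 else 0)) /
      ((1 + γ) * ∑ i, P t i * (if r < e t i then 1 else 0)))) :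
    0 ≤ a t ∧ exp (γ * a t) * normalizer P a (fun t i => if e t i ≤ r then 1 else -1) t ≤
      exp (-(γ ^ 2 / 2)) := by
  have hgb := (sum_mul_ite_le_add_sum_mul_ite_lt r (P t) (e t)).trans hsum
  rw [normalizer_sign_eq]
  exact ⟨half_log_ratio_nonneg hγ hgb hbad hweak ha,
    exp_mul_mul_add_le_exp_neg_sq hγ hgb hbad hweak ha⟩

end

theorem coeff_nonneg_and_correct_weight_gt {m T : ℕ} {P : ℕ → Fin m → ℝ} {a : ℕ → ℝ}
    {e : ℕ → Fin m → ℝ} {r γ : ℝ} (hm : 0 < m) (hT : 0 < T) (hγ : 0 < γ)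
    (hTm : 4 * log m / γ ^ 2 ≤ T)
    (hP0 : ∀ i, P 0 i = 1 / m)
    (hweak : ∀ t < T, 1 / 2 + γ ≤ ∑ i, P t i * (if e t i ≤ r then 1 else 0))
    (hbad : ∀ t < T, 0 < ∑ i, P t i * (if r < e t i then 1 else 0))
    (ha : ∀ t < T, a t = 1 / 2 * log (((1 - γ) * ∑ i, P t i * (if e t i ≤ r then 1 else 0)) /
      ((1 + γ) * ∑ i, P t i * (if r < e t i then 1 else 0))))
    (hupd : ∀ t < T, ∀ i, P (t + 1) i = P t i * exp (-a t * (if e t i ≤ r then 1 else -1)) /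
      ∑ j, P t j * exp (-a t * (if e t j ≤ r then 1 else -1))) :
    (∀ t < T, 0 ≤ a t) ∧ ∀ i, (1 / 2 + γ / 2) * ∑ t ∈ range T, a t <
      ∑ t ∈ range T, if e t i ≤ r then a t else 0 := by
  have hm' : (0 : ℝ) < m := Nat.cast_pos.mpr hm
  have hpos0 : ∀ i, 0 < P 0 i := fun i => hP0 i ▸ by positivity
  have hsum0 : ∑ i, P 0 i = 1 := by simp [hP0, hm'.ne']
  have hround : ∀ t < T, _ := fun t ht => coeff_nonneg_and_exp_mul_normalizer_le hγ.le
    (pos_and_sum_eq_one hpos0 hsum0 hupd t ht.le).2 (hweak t ht) (hbad t ht) (ha t ht)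
  have hprod : (m : ℝ) * ∏ t ∈ range T,
      exp (γ * a t) * normalizer P a (fun t i => if e t i ≤ r then 1 else -1) t < 1 := by
    refine lt_of_le_of_lt ?_ (natCast_mul_exp_neg_half_lt_one hm (x := γ ^ 2 * T)
      (by positivity) ((div_le_iff₀' (by positivity)).mp hTm))
    gcongr
    calc _ ≤ ∏ _t ∈ range T, exp (-(γ ^ 2 / 2)) :=
          prod_le_prod (fun t ht => mul_nonneg (exp_pos _).le
            (normalizer_pos_of_lt hpos0 hsum0 hupd (mem_range.mp ht)).le)
            fun t ht => (hround t (mem_range.mp ht)).2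
      _ = exp (-(γ ^ 2 * T / 2)) := by
          rw [prod_const, card_range, ← exp_nat_mul]; ring_nf
  refine ⟨fun t ht => (hround t ht).1, fun i => ?_⟩
  have hkegl := mul_exp_le_prod hpos0 hsum0 hupd γ i
  rw [hP0] at hkegl
  have hmargin : ∑ t ∈ range T, a t * (γ - if e t i ≤ r then 1 else -1) < 0 := by
    rw [← exp_lt_one_iff]
    have := mul_le_mul_of_nonneg_left hkegl hm'.le
    rw [← mul_assoc, mul_one_div_cancel hm'.ne', one_mul] at this
    linarith
  simp only [mul_sub, sum_sub_distrib, ← sum_mul, sum_mul_sign_eq] at hmargin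
  linarith

end MedBoost

/-- if MedBoost (with its distributions P_t, coefficients a_t, and
multiplicative-weights update) is run for T ≥ C·ln(m)/γ² rounds with weak
hypotheses satisfying the (η/2, γ)-weak learning condition at every round, then
for every sample point both weighted γ/2-quantiles of the ensemble are within
η/2 of the label. -/
theorem stmt16 : ∃ C : ℝ, 0 < C ∧
    ∀ (X : Type) (m T : ℕ), 0 < m → 0 < T →
    ∀ γ η : ℝ, 0 < γ → γ < 1 / 2 → 0 < η →
    C * Real.log m / γ ^ 2 ≤ T →
    ∀ (x : Fin m → X) (y : Fin m → ℝ) (h : ℕ → X → ℝ)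
      (P : ℕ → Fin m → ℝ) (a : ℕ → ℝ),
    (∀ i, P 0 i = 1 / m) →
    (∀ t < T, 1 / 2 + γ ≤
      ∑ i, P t i * (if |h t (x i) - y i| ≤ η / 2 then 1 else 0)) →
    (∀ t < T, 0 <
      ∑ i, P t i * (if η / 2 < |h t (x i) - y i| then 1 else 0)) →
    (∀ t < T, a t = (1 / 2) * Real.log
      (((1 - γ) * ∑ i, P t i * (if |h t (x i) - y i| ≤ η / 2 then 1 else 0)) /
       ((1 + γ) * ∑ i, P t i * (if η / 2 < |h t (x i) - y i| then 1 else 0)))) →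
    (∀ t < T, ∀ i, P (t + 1) i =
      P t i * Real.exp (-(a t) * (if |h t (x i) - y i| ≤ η / 2 then 1 else -1)) /
        ∑ j, P t j * Real.exp
          (-(a t) * (if |h t (x j) - y j| ≤ η / 2 then 1 else -1))) →
    ∀ i, max
        |wQp (γ / 2) (fun s : Fin T => h s (x i)) (fun s : Fin T => a s) - y i|
        |wQm (γ / 2) (fun s : Fin T => h s (x i)) (fun s : Fin T => a s) - y i|
      ≤ η / 2 := by
  refine ⟨4, by norm_num,
    fun X m T hm hT γ η hγ _ _ hTm x y h P a hP0 hweak hbad ha hupd i => ?_⟩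
  obtain ⟨ha_nonneg, hgood⟩ := MedBoost.coeff_nonneg_and_correct_weight_gt
    (e := fun t i => |h t (x i) - y i|) hm hT hγ hTm hP0 hweak hbad ha hupd
  have hw : ∀ s : Fin T, 0 ≤ a s := fun s => ha_nonneg s s.isLt
  have hgoodᵢ : (1 / 2 + γ / 2) * ∑ s : Fin T, a s <
      ∑ s : Fin T, if |h s (x i) - y i| ≤ η / 2 then a s else 0 := by
    simpa only [Fin.sum_univ_eq_sum_range (fun s => a s),
      Fin.sum_univ_eq_sum_range (fun s => if |h s (x i) - y i| ≤ η / 2 then a s else 0)]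
      using hgood i
  exact max_le (abs_wQp_sub_le hw (by positivity) hgoodᵢ)
    (abs_wQm_sub_le hw (by positivity) hgoodᵢ)
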